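/- arXiv:2602.06658 — 6 statements merged into one kernel-verified Lean document; each statement's English description precedes it below -/
import Mathlib

section
/- Let X and Y be compact Hausdorff topological spaces, let c_X : X × X → ℝ and c_Y : Y × Y → ℝ be continuous symmetric functions vanishing on the diagonal (c_X(x,x) = 0, c_Y(y,y) = 0) and definite (c_X(x,x') = 0 implies x = x', and c_Y(y,y') = 0 implies y = y'), and let α, β be Borel probability measures on X and Y. Then there exists a coupling π ∈ Π(α,β) with ∫∫ (c_X(x,x') − c_Y(y,y'))² dπ(x,y) dπ(x',y') = 0 if and only if there exists a measurable map I : X → Y such that the pushforward of α by I equals β and c_X(x,x') = c_Y(I(x), I(x')) for all x, x' in the support of α. -/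
/-!
If the distortion integral of a coupling `π` vanishes then, the integrand being continuous and
nonnegative, `c_X(x, x') = c_Y(y, y')` for all `(x, y), (x', y')` in the support of `π`. Taking
`x = x'` and using definiteness of `c_Y`, the support of `π` is the graph of a map `I` over its
projection, which is closed and carries `α`; `I` is Borel because the preimage of a closed set is
the projection of a compact subset of the support. Conversely, the graph coupling `(id, I)₊α` has
zero distortion since `α` is concentrated on its support.

Supports are conull because definiteness makes `X` and `Y` metrizable: `z ↦ c(z, ·)` embeds the
compact space into `C(Z, ℝ)`.
-/

open MeasureTheory Set Function

/-- The support of a measure: points all of whose neighborhoods have positive measure. -/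
def measSupport {X : Type*} [TopologicalSpace X] [MeasurableSpace X] (α : Measure X) : Set X :=
  {x | ∀ U ∈ nhds x, α U ≠ 0}

lemma measSupport_eq_support {Z : Type*} [TopologicalSpace Z] [MeasurableSpace Z]
    (μ : Measure Z) : measSupport μ = μ.support := by
  ext z
  simp only [measSupport, mem_ofPred_eq, Measure.mem_support_iff_forall, pos_iff_ne_zero]

lemma metrizableSpace_of_continuous_cost {Z : Type*} [TopologicalSpace Z] [CompactSpace Z]
    [T2Space Z] (c : Z → Z → ℝ) (hc : Continuous fun p : Z × Z => c p.1 p.2)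
    (hdiag : ∀ z, c z z = 0) (hdef : ∀ z z', c z z' = 0 → z = z') :
    TopologicalSpace.MetrizableSpace Z := by
  let G : C(Z, C(Z, ℝ)) := ContinuousMap.curry ⟨_, hc⟩
  have hG : Injective G := fun z z' h => hdef z z' <| by
    simpa [G, hdiag] using DFunLike.congr_fun h z'
  exact (G.continuous.isClosedEmbedding hG).toIsEmbedding.metrizableSpace

namespace MeasureTheory.Measure

variable {Z W : Type*} [TopologicalSpace Z] [MeasurableSpace Z]
  [TopologicalSpace W] [MeasurableSpace W]

lemma mk_mem_support_prod {μ : Measure Z} {ν : Measure W} [SFinite ν] {z : Z} {w : W}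
    (hz : z ∈ μ.support) (hw : w ∈ ν.support) : (z, w) ∈ (μ.prod ν).support := by
  rw [mem_support_iff_forall] at hz hw ⊢
  intro U hU
  obtain ⟨V, hV, V', hV', hVU⟩ := mem_nhds_prod_iff.mp hU
  calc 0 < μ V * ν V' := ENNReal.mul_pos (hz V hV).ne' (hw V' hV').ne'
    _ = μ.prod ν (V ×ˢ V') := (prod_prod V V').symm
    _ ≤ μ.prod ν U := measure_mono hVU

lemma support_map_subset_image [HereditarilyLindelofSpace Z] [OpensMeasurableSpace W]
    {f : Z → W} (hf : Measurable f) (hf' : IsClosedMap f) (μ : Measure Z) :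
    (μ.map f).support ⊆ f '' μ.support := by
  have hclosed : IsClosed (f '' μ.support) := hf' _ isClosed_support
  refine support_subset_of_isClosed hclosed ?_
  rw [mem_ae_map_iff hf.aemeasurable hclosed.measurableSet]
  exact Filter.mem_of_superset support_mem_ae (subset_preimage_image f _)

end MeasureTheory.Measure

lemma Continuous.eqOn_support_of_ae_eq {Z E : Type*} [TopologicalSpace Z] [MeasurableSpace Z]
    [TopologicalSpace E] [T2Space E] {f g : Z → E} (hf : Continuous f) (hg : Continuous g)
    {μ : Measure Z} (h : f =ᵐ[μ] g) : EqOn f g μ.support := fun _ hz => by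
  by_contra hne
  exact Measure.subset_compl_support_of_isOpen (isOpen_ne_fun hf hg) (ae_iff.mp h) hne hz

lemma eq_zero_of_integral_integral_eq_zero {Z : Type*} [TopologicalSpace Z] [CompactSpace Z]
    [SecondCountableTopology Z] [MeasurableSpace Z] [OpensMeasurableSpace Z]
    {μ : Measure Z} [IsFiniteMeasure μ] {f : Z → Z → ℝ} (hf : Continuous (uncurry f))
    (hf₀ : ∀ z w, 0 ≤ f z w) (h : ∫ z, ∫ w, f z w ∂μ ∂μ = 0)
    {z w : Z} (hz : z ∈ μ.support) (hw : w ∈ μ.support) : f z w = 0 := by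
  have hint : Integrable (uncurry f) (μ.prod μ) :=
    hf.integrable_of_hasCompactSupport (.of_compactSpace _)
  have hprod : ∫ p, uncurry f p ∂μ.prod μ = 0 := (integral_prod _ hint).trans h
  have hae : uncurry f =ᵐ[μ.prod μ] 0 :=
    (integral_eq_zero_iff_of_nonneg (fun p : Z × Z => hf₀ p.1 p.2) hint).1 hprod
  exact hf.eqOn_support_of_ae_eq continuous_const hae (Measure.mk_mem_support_prod hz hw)

lemma exists_measurable_of_isClosed_of_functional {X Y : Type*} [TopologicalSpace X]
    [MeasurableSpace X] [OpensMeasurableSpace X] [TopologicalSpace Y] [CompactSpace Y]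
    [MeasurableSpace Y] [BorelSpace Y] [Nonempty Y] {S : Set (X × Y)} (hS : IsClosed S)
    (hfun : ∀ p ∈ S, ∀ q ∈ S, p.1 = q.1 → p.2 = q.2) :
    ∃ I : X → Y, Measurable I ∧ ∀ p ∈ S, I p.1 = p.2 := by
  classical
  obtain ⟨y₀⟩ := ‹Nonempty Y›
  let I : X → Y := fun x => if h : ∃ y, (x, y) ∈ S then h.choose else y₀
  have hI : ∀ p ∈ S, I p.1 = p.2 := fun p hp => by
    have h : ∃ y, (p.1, y) ∈ S := ⟨p.2, hp⟩
    simpa only [I, dif_pos h] using hfun _ h.choose_spec p hp rfl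
  refine ⟨I, measurable_of_isClosed fun C hC => ?_, hI⟩
  have hpre : I ⁻¹' C = Prod.fst '' (S ∩ Prod.snd ⁻¹' C) ∪ (Prod.fst '' S)ᶜ ∩ {_x | y₀ ∈ C} := by
    ext x
    by_cases hx : ∃ y, (x, y) ∈ S
    · obtain ⟨y, hy⟩ := hx
      have hxD : x ∈ Prod.fst '' S := ⟨(x, y), hy, rfl⟩
      simp only [mem_preimage, mem_union, mem_inter_iff, mem_compl_iff, hxD, not_true,
        false_and, or_false, hI _ hy]
      constructor
      · exact fun hyC => ⟨(x, y), ⟨hy, hyC⟩, rfl⟩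
      · rintro ⟨q, ⟨hq, hqC⟩, rfl⟩
        obtain rfl : y = q.2 := hfun _ hy q hq rfl
        exact hqC
    · have hxD : x ∉ Prod.fst '' S := fun ⟨q, hq, hqx⟩ => hx ⟨q.2, hqx ▸ hq⟩
      simp only [mem_preimage, I, dif_neg hx, mem_union, mem_inter_iff, mem_compl_iff,
        mem_ofPred_eq, hxD, not_false_eq_true, true_and]
      exact ⟨Or.inr, fun h => h.elim (fun h' => absurd (image_mono inter_subset_left h') hxD) id⟩
  rw [hpre]
  have hfst := isClosedMap_fst_of_compactSpace (X := X) (Y := Y)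
  exact (hfst _ (hS.inter (hC.preimage continuous_snd))).measurableSet.union
    ((hfst _ hS).measurableSet.compl.inter (.const _))

lemma integral_integral_map {A B E : Type*} [MeasurableSpace A] [MeasurableSpace B]
    [NormedAddCommGroup E] [NormedSpace ℝ E] {μ : Measure A} [SFinite μ] {f : A → B}
    (hf : Measurable f) {g : B → B → E} (hg : StronglyMeasurable (uncurry g)) :
    ∫ b, ∫ b', g b b' ∂μ.map f ∂μ.map f = ∫ a, ∫ a', g (f a) (f a') ∂μ ∂μ := by
  have hinner : ∀ b, ∫ b', g b b' ∂μ.map f = ∫ a', g b (f a') ∂μ := fun b =>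
    integral_map hf.aemeasurable (hg.comp_measurable measurable_prodMk_left).aestronglyMeasurable
  simp_rw [hinner]
  have houter : StronglyMeasurable fun b => ∫ a', g b (f a') ∂μ :=
    (hg.comp_measurable (measurable_fst.prodMk (hf.comp measurable_snd))).integral_prod_right'
  exact integral_map hf.aemeasurable houter.aestronglyMeasurable

lemma continuous_uncurry_sq_sub {X Y : Type*} [TopologicalSpace X] [TopologicalSpace Y]
    {cX : X → X → ℝ} {cY : Y → Y → ℝ} (hcX : Continuous fun p : X × X => cX p.1 p.2)
    (hcY : Continuous fun p : Y × Y => cY p.1 p.2) :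
    Continuous (uncurry fun p q : X × Y => (cX p.1 q.1 - cY p.2 q.2) ^ 2) :=
  ((hcX.comp (continuous_fst.fst.prodMk continuous_snd.fst)).sub
    (hcY.comp (continuous_fst.snd.prodMk continuous_snd.snd))).pow 2

section

variable {X Y : Type*} [TopologicalSpace X] [TopologicalSpace Y]
  [SecondCountableTopology X] [SecondCountableTopology Y]
  [MeasurableSpace X] [OpensMeasurableSpace X] [MeasurableSpace Y]
  {cX : X → X → ℝ} {cY : Y → Y → ℝ}

lemma exists_measurable_isometry_of_integral_integral_eq_zero [CompactSpace X] [CompactSpace Y]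
    [BorelSpace Y] [Nonempty Y]
    (hcX : Continuous fun p : X × X => cX p.1 p.2) (hcY : Continuous fun p : Y × Y => cY p.1 p.2)
    (hXdiag : ∀ x, cX x x = 0) (hYdef : ∀ y y', cY y y' = 0 → y = y')
    {π : Measure (X × Y)} [IsFiniteMeasure π]
    (h : ∫ p, ∫ q, (cX p.1 q.1 - cY p.2 q.2) ^ 2 ∂π ∂π = 0) :
    ∃ I : X → Y, Measurable I ∧ π.map (I ∘ Prod.fst) = π.map Prod.snd ∧
      ∀ x ∈ (π.map Prod.fst).support, ∀ x' ∈ (π.map Prod.fst).support,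
        cX x x' = cY (I x) (I x') := by
  have hcost : ∀ p ∈ π.support, ∀ q ∈ π.support, cX p.1 q.1 = cY p.2 q.2 := fun p hp q hq =>
    sub_eq_zero.mp <| (pow_eq_zero_iff two_ne_zero).mp <|
      eq_zero_of_integral_integral_eq_zero (continuous_uncurry_sq_sub hcX hcY)
        (fun _ _ => sq_nonneg _) h hp hq
  obtain ⟨I, hI, hIS⟩ := exists_measurable_of_isClosed_of_functional
    (Measure.isClosed_support (μ := π))
    fun p hp q hq hpq => hYdef _ _ (by rw [← hcost p hp q hq, hpq, hXdiag])
  refine ⟨I, hI, Measure.map_congr ?_, fun x hx x' hx' => ?_⟩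
  · filter_upwards [Measure.support_mem_ae] with p hp using hIS p hp
  have hfst := Measure.support_map_subset_image measurable_fst isClosedMap_fst_of_compactSpace π
  obtain ⟨p, hp, rfl⟩ := hfst hx
  obtain ⟨q, hq, rfl⟩ := hfst hx'
  rw [hIS p hp, hIS q hq, hcost p hp q hq]

lemma integral_integral_map_graph_eq_zero [OpensMeasurableSpace Y]
    (hcX : Continuous fun p : X × X => cX p.1 p.2) (hcY : Continuous fun p : Y × Y => cY p.1 p.2)
    {α : Measure X} [SFinite α] {I : X → Y}
    (hI : Measurable I) (hIc : ∀ x ∈ α.support, ∀ x' ∈ α.support, cX x x' = cY (I x) (I x')) :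
    ∫ p, ∫ q, (cX p.1 q.1 - cY p.2 q.2) ^ 2 ∂α.map (fun x => (x, I x))
      ∂α.map (fun x => (x, I x)) = 0 := by
  have hgraph : Measurable fun x => (x, I x) := measurable_id.prodMk hI
  rw [integral_integral_map hgraph (continuous_uncurry_sq_sub hcX hcY).stronglyMeasurable]
  refine integral_eq_zero_of_ae ?_
  filter_upwards [Measure.support_mem_ae] with x hx
  refine integral_eq_zero_of_ae ?_
  filter_upwards [Measure.support_mem_ae] with x' hx'
  simp [hIc x hx x' hx']

end

theorem gw_isometry_general
    {X Y : Type*} [TopologicalSpace X] [TopologicalSpace Y]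
    [CompactSpace X] [CompactSpace Y] [T2Space X] [T2Space Y]
    [MeasurableSpace X] [BorelSpace X] [MeasurableSpace Y] [BorelSpace Y]
    (cX : X → X → ℝ) (cY : Y → Y → ℝ)
    (hcX : Continuous fun p : X × X => cX p.1 p.2)
    (hcY : Continuous fun p : Y × Y => cY p.1 p.2)
    (hXdiag : ∀ x, cX x x = 0) (hYdiag : ∀ y, cY y y = 0)
    (hXdef : ∀ x x', cX x x' = 0 → x = x') (hYdef : ∀ y y', cY y y' = 0 → y = y')
    (α : Measure X) (β : Measure Y) [IsProbabilityMeasure α] [IsProbabilityMeasure β] :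
    (∃ π : Measure (X × Y), π.map Prod.fst = α ∧ π.map Prod.snd = β ∧
        ∫ p, ∫ q, (cX p.1 q.1 - cY p.2 q.2) ^ 2 ∂π ∂π = 0) ↔
      (∃ I : X → Y, Measurable I ∧ α.map I = β ∧
        ∀ x ∈ measSupport α, ∀ x' ∈ measSupport α, cX x x' = cY (I x) (I x')) := by
  have := metrizableSpace_of_continuous_cost cX hcX hXdiag hXdef
  have := metrizableSpace_of_continuous_cost cY hcY hYdiag hYdef
  have := nonempty_of_isProbabilityMeasure β
  simp only [measSupport_eq_support]
  constructor
  · rintro ⟨π, rfl, rfl, hπ⟩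
    have := Measure.isProbabilityMeasure_of_map (μ := π) Prod.fst
    obtain ⟨I, hI, hIπ, hIc⟩ :=
      exists_measurable_isometry_of_integral_integral_eq_zero hcX hcY hXdiag hYdef hπ
    exact ⟨I, hI, by rw [Measure.map_map hI measurable_fst, hIπ], hIc⟩
  · rintro ⟨I, hI, rfl, hIc⟩
    have hgraph : Measurable fun x => (x, I x) := measurable_id.prodMk hI
    refine ⟨α.map fun x => (x, I x), ?_, ?_, integral_integral_map_graph_eq_zero hcX hcY hI hIc⟩
    · rw [Measure.map_map measurable_fst hgraph]
      exact Measure.map_id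
    · rw [Measure.map_map measurable_snd hgraph]
      rfl

/-- GW distance zero (existence of a coupling with zero quadratic loss)
is equivalent to the existence of a measure-preserving map matching the costs on supports. -/
theorem gw_isometry
    {X Y : Type*} [TopologicalSpace X] [TopologicalSpace Y]
    [CompactSpace X] [CompactSpace Y] [T2Space X] [T2Space Y]
    [MeasurableSpace X] [BorelSpace X] [MeasurableSpace Y] [BorelSpace Y]
    (cX : X → X → ℝ) (cY : Y → Y → ℝ)
    (hcX : Continuous fun p : X × X => cX p.1 p.2)
    (hcY : Continuous fun p : Y × Y => cY p.1 p.2)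
    (hXsymm : ∀ x x', cX x x' = cX x' x) (hYsymm : ∀ y y', cY y y' = cY y' y)
    (hXdiag : ∀ x, cX x x = 0) (hYdiag : ∀ y, cY y y = 0)
    (hXdef : ∀ x x', cX x x' = 0 → x = x') (hYdef : ∀ y y', cY y y' = 0 → y = y')
    (α : Measure X) (β : Measure Y) [IsProbabilityMeasure α] [IsProbabilityMeasure β] :
    (∃ π : Measure (X × Y), π.map Prod.fst = α ∧ π.map Prod.snd = β ∧
        ∫ p, ∫ q, (cX p.1 q.1 - cY p.2 q.2) ^ 2 ∂π ∂π = 0) ↔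
      (∃ I : X → Y, Measurable I ∧ α.map I = β ∧
        ∀ x ∈ measSupport α, ∀ x' ∈ measSupport α, cX x x' = cY (I x) (I x')) :=
  gw_isometry_general cX cY hcX hcY hXdiag hYdiag hXdef hYdef α β
end

section
/- Let H_X and H_Y be separable real Hilbert spaces, and let α and β be compactly supported Borel probability measures on H_X and H_Y that are centered, i.e. the Bochner integrals ∫ x dα(x) and ∫ y dβ(y) vanish. Then for every coupling π ∈ Π(α,β), the Gromov–Wasserstein loss satisfies L(π) = C(α,β) − 8 · ∫∫ ⟨x,x'⟩⟨y,y'⟩ dπ(x,y) dπ(x',y') − 4 · ∫ ‖x‖²‖y‖² dπ(x,y). -/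
/-!
Write `(x, y)` and `(x', y')` for the two points sampled from `π ⊗ π`. Expanding
`‖x - x'‖² = ‖x‖² + ‖x'‖² - 2⟪x, x'⟫` and its analogue in `y` turns the integrand into
`‖x - x'‖⁴ + ‖y - y'‖⁴ - 2 (‖x‖² + ‖x'‖²)(‖y‖² + ‖y'‖²) - 8⟪x, x'⟫⟪y, y'⟫` plus multiples of
`(‖x‖² + ‖x'‖²)⟪y, y'⟫` and `(‖y‖² + ‖y'‖²)⟪x, x'⟫`. The product term integrates to
`2 ∫ ‖x‖²‖y‖² dπ + 2 (∫ ‖x‖² dα)(∫ ‖y‖² dβ)`, and the last two terms vanish: after swapping the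
points if necessary, integrating out `(x', y')` leaves `⟪y, ∫ y' dβ⟫ = 0`. Compact supports make
every integrand that occurs integrable.
-/

open MeasureTheory

open scoped RealInnerProductSpace

theorem sq_norm_sub_sq_sub_norm_sub_sq {E F : Type*} [NormedAddCommGroup E]
    [InnerProductSpace ℝ E] [NormedAddCommGroup F] [InnerProductSpace ℝ F]
    (x x' : E) (y y' : F) :
    (‖x - x'‖ ^ 2 - ‖y - y'‖ ^ 2) ^ 2 =
      ‖x - x'‖ ^ 4 + ‖y - y'‖ ^ 4 - 2 * ((‖x‖ ^ 2 + ‖x'‖ ^ 2) * (‖y‖ ^ 2 + ‖y'‖ ^ 2))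
        + 4 * ((‖x‖ ^ 2 + ‖x'‖ ^ 2) * ⟪y, y'⟫) + 4 * ((‖y‖ ^ 2 + ‖y'‖ ^ 2) * ⟪x, x'⟫)
        - 8 * (⟪x, x'⟫ * ⟪y, y'⟫) := by
  calc (‖x - x'‖ ^ 2 - ‖y - y'‖ ^ 2) ^ 2
      = ‖x - x'‖ ^ 4 + ‖y - y'‖ ^ 4 - 2 * (‖x - x'‖ ^ 2 * ‖y - y'‖ ^ 2) := by ring
    _ = _ := by rw [norm_sub_sq_real, norm_sub_sq_real]; ring

theorem ContinuousOn.integrable_of_ae_mem {X E : Type*} [TopologicalSpace X] [T2Space X]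
    [MeasurableSpace X] [OpensMeasurableSpace X] [NormedAddCommGroup E] {μ : Measure X}
    [IsFiniteMeasureOnCompacts μ] {K : Set X} {f : X → E} (hf : ContinuousOn f K)
    (hK : IsCompact K) (hμK : ∀ᵐ x ∂μ, x ∈ K) : Integrable f μ := by
  rw [← Measure.restrict_eq_self_of_ae_mem hμK]
  exact hf.integrableOn_compact hK

section Prod

variable {X Y : Type*} [MeasurableSpace X] [MeasurableSpace Y] {μ : Measure X}

theorem ae_mem_prod_of_ae_mem {ν : Measure Y} [SFinite ν] {s : Set X} {t : Set Y}
    (hs : ∀ᵐ x ∂μ, x ∈ s) (ht : ∀ᵐ y ∂ν, y ∈ t) : ∀ᵐ z ∂μ.prod ν, z ∈ s ×ˢ t :=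
  (Measure.quasiMeasurePreserving_fst.ae hs).and (Measure.quasiMeasurePreserving_snd.ae ht)

theorem integral_comp_of_map_eq {E : Type*} [NormedAddCommGroup E] [NormedSpace ℝ E]
    {α : Measure Y} {φ : X → Y} (hφ : Measurable φ) (hα : μ.map φ = α) {f : Y → E}
    (hf : AEStronglyMeasurable f α) : ∫ x, f (φ x) ∂μ = ∫ y, f y ∂α := by
  subst hα
  exact (integral_map hφ.aemeasurable hf).symm

theorem integral_integral_comp_of_map_eq {E : Type*} [NormedAddCommGroup E] [NormedSpace ℝ E]
    [SFinite μ] {α : Measure Y} {φ : X → Y} (hφ : Measurable φ) (hα : μ.map φ = α)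
    {f : Y → Y → E} (hf : Integrable (Function.uncurry f) (α.prod α)) :
    ∫ x, ∫ x', f (φ x) (φ x') ∂μ ∂μ = ∫ y, ∫ y', f y y' ∂α ∂α := by
  subst hα
  have hprod := Measure.map_prod_map μ μ hφ hφ
  rw [integral_integral hf, integral_integral ((hprod ▸ hf).comp_measurable (hφ.prodMap hφ)),
    hprod, integral_map (hφ.prodMap hφ).aemeasurable (hprod ▸ hf).aestronglyMeasurable]
  rfl

end Prod

section SelfProduct

variable {Z E : Type*} [MeasurableSpace Z] {μ : Measure Z}

theorem integral_prod_add_mul_add [IsProbabilityMeasure μ] {u v : Z → ℝ}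
    (hu : Integrable u μ) (hv : Integrable v μ) (huv : Integrable (fun z => u z * v z) μ) :
    ∫ w, (u w.1 + u w.2) * (v w.1 + v w.2) ∂μ.prod μ =
      2 * ∫ z, u z * v z ∂μ + 2 * (∫ z, u z ∂μ) * ∫ z, v z ∂μ := by
  have hexp : ∀ w : Z × Z, (u w.1 + u w.2) * (v w.1 + v w.2) =
      u w.1 * v w.1 + u w.2 * v w.2 + (u w.1 * v w.2 + v w.1 * u w.2) := fun w => by ring
  have h11 := huv.comp_fst μ
  have h22 := huv.comp_snd μ
  have h12 := hu.mul_prod hv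
  have h21 := hv.mul_prod hu
  simp_rw [hexp]
  rw [integral_add, integral_add h11 h22, integral_add h12 h21,
    integral_fun_fst (fun z => u z * v z), integral_fun_snd (fun z => u z * v z),
    integral_prod_mul, integral_prod_mul]
  · simp only [probReal_univ, one_smul]
    ring
  exacts [h11.add h22, h12.add h21]

variable [NormedAddCommGroup E] [InnerProductSpace ℝ E] [CompleteSpace E]

theorem integral_prod_mul_inner_eq_zero [SFinite μ] {f : Z → ℝ} {g : Z → E}
    (hg : Integrable g μ) (hg0 : ∫ z, g z ∂μ = 0)
    (hfg : Integrable (fun w : Z × Z => f w.1 * ⟪g w.1, g w.2⟫) (μ.prod μ)) :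
    ∫ w, f w.1 * ⟪g w.1, g w.2⟫ ∂μ.prod μ = 0 := by
  rw [integral_prod _ hfg]
  simp [integral_const_mul, integral_inner hg, hg0]

theorem integral_prod_add_mul_inner_eq_zero [SFinite μ] {f : Z → ℝ} {g : Z → E}
    (hg : Integrable g μ) (hg0 : ∫ z, g z ∂μ = 0)
    (hfg : Integrable (fun w : Z × Z => f w.1 * ⟪g w.1, g w.2⟫) (μ.prod μ)) :
    ∫ w, (f w.1 + f w.2) * ⟪g w.1, g w.2⟫ ∂μ.prod μ = 0 := by
  have hfg_swap : Integrable (fun w : Z × Z => f w.2 * ⟪g w.1, g w.2⟫) (μ.prod μ) := by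
    simpa only [Function.comp_def, Prod.fst_swap, Prod.snd_swap, real_inner_comm] using hfg.swap
  have hswap : ∫ w, f w.2 * ⟪g w.1, g w.2⟫ ∂μ.prod μ =
      ∫ w, f w.1 * ⟪g w.1, g w.2⟫ ∂μ.prod μ := by
    rw [← integral_prod_swap]
    simp only [Prod.fst_swap, Prod.snd_swap, real_inner_comm]
  simp_rw [add_mul]
  rw [integral_add hfg hfg_swap, hswap, integral_prod_mul_inner_eq_zero hg hg0 hfg, add_zero]

end SelfProduct

section Centered

variable {E F : Type*}
  [NormedAddCommGroup E] [InnerProductSpace ℝ E] [CompleteSpace E]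
  [SecondCountableTopology E] [MeasurableSpace E] [BorelSpace E]
  [NormedAddCommGroup F] [InnerProductSpace ℝ F] [CompleteSpace F]
  [SecondCountableTopology F] [MeasurableSpace F] [BorelSpace F]

theorem integral_integral_sq_sub_sq_of_centered {μ : Measure (E × F)} [IsProbabilityMeasure μ]
    {K : Set (E × F)} (hK : IsCompact K) (hμK : ∀ᵐ p ∂μ, p ∈ K)
    (hx0 : ∫ p, p.1 ∂μ = 0) (hy0 : ∫ p, p.2 ∂μ = 0) :
    ∫ p, ∫ q, (‖p.1 - q.1‖ ^ 2 - ‖p.2 - q.2‖ ^ 2) ^ 2 ∂μ ∂μ =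
      (∫ p, ∫ q, ‖p.1 - q.1‖ ^ 4 ∂μ ∂μ) + (∫ p, ∫ q, ‖p.2 - q.2‖ ^ 4 ∂μ ∂μ)
        - 4 * (∫ p, ‖p.1‖ ^ 2 ∂μ) * (∫ p, ‖p.2‖ ^ 2 ∂μ)
        - 8 * (∫ p, ∫ q, ⟪p.1, q.1⟫ * ⟪p.2, q.2⟫ ∂μ ∂μ)
        - 4 * ∫ p, ‖p.1‖ ^ 2 * ‖p.2‖ ^ 2 ∂μ := by
  have hint {f : E × F → ℝ} (hf : Continuous f) : Integrable f μ :=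
    hf.continuousOn.integrable_of_ae_mem hK hμK
  have hint₂ {f : (E × F) × (E × F) → ℝ} (hf : Continuous f) : Integrable f (μ.prod μ) :=
    hf.continuousOn.integrable_of_ae_mem (hK.prod hK) (ae_mem_prod_of_ae_mem hμK hμK)
  have hNN := integral_prod_add_mul_add (u := fun p : E × F => ‖p.1‖ ^ 2)
    (v := fun p : E × F => ‖p.2‖ ^ 2) (hint (by fun_prop)) (hint (by fun_prop))
    (hint (by fun_prop))
  have hNI : ∫ w, (‖w.1.1‖ ^ 2 + ‖w.2.1‖ ^ 2) * ⟪w.1.2, w.2.2⟫ ∂μ.prod μ = 0 :=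
    integral_prod_add_mul_inner_eq_zero (f := fun p => ‖p.1‖ ^ 2)
      (continuous_snd.continuousOn.integrable_of_ae_mem hK hμK) hy0 (hint₂ (by fun_prop))
  have hIN : ∫ w, (‖w.1.2‖ ^ 2 + ‖w.2.2‖ ^ 2) * ⟪w.1.1, w.2.1⟫ ∂μ.prod μ = 0 :=
    integral_prod_add_mul_inner_eq_zero (f := fun p => ‖p.2‖ ^ 2)
      (continuous_fst.continuousOn.integrable_of_ae_mem hK hμK) hx0 (hint₂ (by fun_prop))
  calc ∫ p, ∫ q, (‖p.1 - q.1‖ ^ 2 - ‖p.2 - q.2‖ ^ 2) ^ 2 ∂μ ∂μ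
      = ∫ w, (‖w.1.1 - w.2.1‖ ^ 2 - ‖w.1.2 - w.2.2‖ ^ 2) ^ 2 ∂μ.prod μ :=
        integral_integral (hint₂ (by fun_prop))
    _ = ∫ w, (‖w.1.1 - w.2.1‖ ^ 4 + ‖w.1.2 - w.2.2‖ ^ 4
          - 2 * ((‖w.1.1‖ ^ 2 + ‖w.2.1‖ ^ 2) * (‖w.1.2‖ ^ 2 + ‖w.2.2‖ ^ 2))
          + 4 * ((‖w.1.1‖ ^ 2 + ‖w.2.1‖ ^ 2) * ⟪w.1.2, w.2.2⟫)
          + 4 * ((‖w.1.2‖ ^ 2 + ‖w.2.2‖ ^ 2) * ⟪w.1.1, w.2.1⟫)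
          - 8 * (⟪w.1.1, w.2.1⟫ * ⟪w.1.2, w.2.2⟫)) ∂μ.prod μ := by
        simp only [sq_norm_sub_sq_sub_norm_sub_sq]
    _ = _ := by
        rw [integral_sub, integral_add, integral_add, integral_sub, integral_add,
          integral_const_mul, integral_const_mul, integral_const_mul, integral_const_mul,
          hNN, hNI, hIN, integral_integral (hint₂ ?_), integral_integral (hint₂ ?_),
          integral_integral (hint₂ ?_)]
        · ring
        all_goals first | exact hint₂ (by fun_prop) | fun_prop

end Centered

/-- decomposition of the Gromov–Wasserstein loss with squared-norm costs
for centered compactly supported probability measures on separable Hilbert spaces. -/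
theorem gw_loss_decomposition
    {HX HY : Type*}
    [NormedAddCommGroup HX] [InnerProductSpace ℝ HX] [CompleteSpace HX]
    [SecondCountableTopology HX] [MeasurableSpace HX] [BorelSpace HX]
    [NormedAddCommGroup HY] [InnerProductSpace ℝ HY] [CompleteSpace HY]
    [SecondCountableTopology HY] [MeasurableSpace HY] [BorelSpace HY]
    (α : Measure HX) (β : Measure HY)
    [IsProbabilityMeasure α] [IsProbabilityMeasure β]
    (KX : Set HX) (KY : Set HY) (hKX : IsCompact KX) (hKY : IsCompact KY)
    (hαK : α KXᶜ = 0) (hβK : β KYᶜ = 0)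
    (hαcentered : ∫ x, x ∂α = 0) (hβcentered : ∫ y, y ∂β = 0)
    (π : Measure (HX × HY))
    (hπ1 : π.map Prod.fst = α) (hπ2 : π.map Prod.snd = β) :
    ∫ p, ∫ q, (‖p.1 - q.1‖ ^ 2 - ‖p.2 - q.2‖ ^ 2) ^ 2 ∂π ∂π =
      ((∫ x, ∫ x', ‖x - x'‖ ^ 4 ∂α ∂α) + (∫ y, ∫ y', ‖y - y'‖ ^ 4 ∂β ∂β)
          - 4 * (∫ x, ‖x‖ ^ 2 ∂α) * (∫ y, ‖y‖ ^ 2 ∂β))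
        - 8 * (∫ p, ∫ q, (inner ℝ p.1 q.1 : ℝ) * (inner ℝ p.2 q.2 : ℝ) ∂π ∂π)
        - 4 * ∫ p, ‖p.1‖ ^ 2 * ‖p.2‖ ^ 2 ∂π := by
  have : IsProbabilityMeasure (π.map Prod.fst) := hπ1 ▸ inferInstance
  have := Measure.isProbabilityMeasure_of_map (μ := π) Prod.fst
  have hαK' : ∀ᵐ x ∂α, x ∈ KX := ae_iff.2 hαK
  have hβK' : ∀ᵐ y ∂β, y ∈ KY := ae_iff.2 hβK
  have hπK : ∀ᵐ p ∂π, p ∈ KX ×ˢ KY :=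
    (ae_of_ae_map measurable_fst.aemeasurable (hπ1 ▸ hαK')).and
      (ae_of_ae_map measurable_snd.aemeasurable (hπ2 ▸ hβK'))
  have hXX : ∫ p, ∫ q, ‖p.1 - q.1‖ ^ 4 ∂π ∂π = ∫ x, ∫ x', ‖x - x'‖ ^ 4 ∂α ∂α :=
    integral_integral_comp_of_map_eq measurable_fst hπ1 (f := fun x x' => ‖x - x'‖ ^ 4)
      ((Continuous.continuousOn (by fun_prop)).integrable_of_ae_mem (hKX.prod hKX)
        (ae_mem_prod_of_ae_mem hαK' hαK'))
  have hYY : ∫ p, ∫ q, ‖p.2 - q.2‖ ^ 4 ∂π ∂π = ∫ y, ∫ y', ‖y - y'‖ ^ 4 ∂β ∂β :=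
    integral_integral_comp_of_map_eq measurable_snd hπ2 (f := fun y y' => ‖y - y'‖ ^ 4)
      ((Continuous.continuousOn (by fun_prop)).integrable_of_ae_mem (hKY.prod hKY)
        (ae_mem_prod_of_ae_mem hβK' hβK'))
  have hx0 : ∫ p, p.1 ∂π = 0 :=
    (integral_comp_of_map_eq measurable_fst hπ1 (f := id) (by fun_prop)).trans hαcentered
  have hy0 : ∫ p, p.2 ∂π = 0 :=
    (integral_comp_of_map_eq measurable_snd hπ2 (f := id) (by fun_prop)).trans hβcentered
  have hx2 : ∫ p, ‖p.1‖ ^ 2 ∂π = ∫ x, ‖x‖ ^ 2 ∂α :=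
    integral_comp_of_map_eq measurable_fst hπ1 (f := fun x => ‖x‖ ^ 2) (by fun_prop)
  have hy2 : ∫ p, ‖p.2‖ ^ 2 ∂π = ∫ y, ‖y‖ ^ 2 ∂β :=
    integral_comp_of_map_eq measurable_snd hπ2 (f := fun y => ‖y‖ ^ 2) (by fun_prop)
  rw [integral_integral_sq_sub_sq_of_centered (hKX.prod hKY) hπK hx0 hy0, hXX, hYY, hx2, hy2]
end

section
/- Let X and Y be compact metric spaces, c : X × Y → ℝ a continuous nonnegative cost, and α, β Borel probability measures on X and Y. Then the entropic optimal-transport cost converges as ε → +∞: lim_{ε→+∞} OT_ε(α,β) = ∫∫ c(x,y) dα(x) dβ(y). -/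
open MeasureTheory Classical Filter

/-- Kullback–Leibler divergence, with value `⊤` when `π` is not absolutely continuous
with respect to `μ` or the log-likelihood ratio is not integrable. -/
noncomputable def klE {Z : Type*} [MeasurableSpace Z] (π μ : Measure Z) : EReal :=
  if π ≪ μ ∧ Integrable (llr π μ) π then ((∫ z, llr π μ z ∂π : ℝ) : EReal) else ⊤

/-- Entropic optimal transport cost for a cost `c`, temperature `ε`. -/
noncomputable def otE {X Y : Type*} [MeasurableSpace X] [MeasurableSpace Y]
    (c : X → Y → ℝ) (ε : ℝ) (α : Measure X) (β : Measure Y) [SFinite β] : EReal :=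
  ⨅ π ∈ {π : Measure (X × Y) | π.map Prod.fst = α ∧ π.map Prod.snd = β},
    ((∫ p, c p.1 p.2 ∂π : ℝ) : EReal) + (ε : EReal) * klE π (α.prod β)

/-! The product coupling `α ⊗ β` has zero relative entropy, so `otE c ε α β ≤ ∫ c d(α ⊗ β)`.
Conversely, the Fenchel–Young inequality `x y ≤ (x log x + 1 - x) + eʸ - 1`, applied pointwise to
the density of a coupling `γ` and to `y = -c/ε`, gives
`∫ c dγ + ε KL(γ ‖ α ⊗ β) ≥ ∫ ε (1 - e^{-c/ε}) d(α ⊗ β)`, and the right-hand side tends to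
`∫ c d(α ⊗ β)` by dominated convergence, since `0 ≤ ε (1 - e^{-c/ε}) ≤ c`. -/

open Real Set InformationTheory Topology

lemma InformationTheory.mul_le_klFun_add_exp_sub_one {x : ℝ} (hx : 0 ≤ x) (y : ℝ) :
    x * y ≤ klFun x + exp y - 1 := by
  rcases hx.eq_or_lt with rfl | hx
  · simp only [zero_mul, klFun_zero]
    linarith [exp_pos y]
  · have h := add_one_le_exp (y - log x)
    rw [exp_sub, exp_log hx, le_div_iff₀ hx] at h
    rw [klFun_apply]
    linarith

lemma integral_le_integral_llr_add_integral_exp {Ω : Type*} [MeasurableSpace Ω]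
    {ν μ : Measure Ω} [IsFiniteMeasure ν] [IsFiniteMeasure μ] (hνμ : ν ≪ μ)
    (hllr : Integrable (llr ν μ) ν) {f : Ω → ℝ} (hf : Integrable f ν)
    (hexp : Integrable (fun z ↦ exp (f z)) μ) :
    ∫ z, f z ∂ν ≤ ∫ z, llr ν μ z ∂ν + ∫ z, exp (f z) ∂μ - ν.real univ := by
  have hklFun := (integrable_klFun_rnDeriv_iff hνμ).2 hllr
  have hexp_sub : Integrable (fun z ↦ exp (f z) - 1) μ := hexp.sub (integrable_const 1)
  have h : ∫ z, (ν.rnDeriv μ z).toReal * f z ∂μ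
      ≤ ∫ z, (klFun (ν.rnDeriv μ z).toReal + (exp (f z) - 1)) ∂μ :=
    integral_mono ((integrable_toReal_rnDeriv_mul_iff hνμ).2 hf) (hklFun.add hexp_sub) fun z ↦
      (mul_le_klFun_add_exp_sub_one ENNReal.toReal_nonneg (f z)).trans_eq (add_sub_assoc _ _ _)
  rw [integral_toReal_rnDeriv_mul hνμ, integral_add hklFun hexp_sub,
    integral_klFun_rnDeriv hνμ hllr, integral_sub hexp (integrable_const 1), integral_const,
    smul_eq_mul, mul_one] at h
  linarith

lemma tendsto_mul_one_sub_exp_neg_div (a : ℝ) :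
    Tendsto (fun ε : ℝ ↦ ε * (1 - exp (-a / ε))) atTop (𝓝 a) := by
  have hderiv : HasDerivAt (fun t ↦ -exp (-a * t)) a 0 := by
    have h := ((hasDerivAt_id' (0 : ℝ)).const_mul (-a)).exp.neg
    simp only [mul_zero, exp_zero, mul_one, one_mul, neg_neg] at h
    exact h
  refine (hderiv.tendsto_slope_zero_right.comp tendsto_inv_atTop_nhdsGT_zero).congr fun ε ↦ ?_
  simp only [Function.comp_apply, inv_inv, zero_add, mul_zero, exp_zero, smul_eq_mul]
  rw [← div_eq_mul_inv]
  ring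

lemma abs_mul_one_sub_exp_neg_div_le {a ε : ℝ} (ha : 0 ≤ a) (hε : 0 < ε) :
    |ε * (1 - exp (-a / ε))| ≤ a := by
  have hexp_le : exp (-a / ε) ≤ 1 :=
    exp_le_one_iff.2 (div_nonpos_of_nonpos_of_nonneg (neg_nonpos.2 ha) hε.le)
  rw [abs_of_nonneg (mul_nonneg hε.le (sub_nonneg.2 hexp_le)), ← le_div_iff₀' hε]
  linarith [add_one_le_exp (-a / ε), neg_div ε a]

lemma tendsto_integral_mul_one_sub_exp_neg_div {Ω : Type*} [MeasurableSpace Ω] {μ : Measure Ω}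
    {f : Ω → ℝ} (hf : Integrable f μ) (hf₀ : 0 ≤ᵐ[μ] f) :
    Tendsto (fun ε : ℝ ↦ ∫ z, ε * (1 - exp (-f z / ε)) ∂μ) atTop (𝓝 (∫ z, f z ∂μ)) := by
  refine tendsto_integral_filter_of_dominated_convergence f
    (Eventually.of_forall fun ε ↦ ?_) ?_ hf
    (Eventually.of_forall fun z ↦ tendsto_mul_one_sub_exp_neg_div (f z))
  · have := hf.aestronglyMeasurable
    fun_prop
  · filter_upwards [eventually_gt_atTop 0] with ε hε
    filter_upwards [hf₀] with z hz
    exact abs_mul_one_sub_exp_neg_div_le hz hε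

lemma klE_self {Z : Type*} [MeasurableSpace Z] (μ : Measure Z) [SigmaFinite μ] :
    klE μ μ = 0 := by
  have hInt : Integrable (llr μ μ) μ := (integrable_zero _ _ _).congr (llr_self μ).symm
  rw [klE, if_pos ⟨.rfl, hInt⟩, integral_congr_ae (llr_self μ)]
  simp

section otE

variable {X Y : Type*} [MeasurableSpace X] [MeasurableSpace Y] (c : X → Y → ℝ)
  (α : Measure X) (β : Measure Y) [IsProbabilityMeasure α] [IsProbabilityMeasure β]

lemma otE_le_integral_prod (ε : ℝ) :
    otE c ε α β ≤ ((∫ p, c p.1 p.2 ∂(α.prod β) : ℝ) : EReal) :=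
  calc otE c ε α β
      ≤ ((∫ p, c p.1 p.2 ∂(α.prod β) : ℝ) : EReal) + ε * klE (α.prod β) (α.prod β) :=
        iInf₂_le _ ⟨by simp, by simp⟩
    _ = _ := by rw [klE_self, mul_zero, add_zero]

lemma integral_mul_one_sub_exp_neg_div_le_otE (hc : Measurable fun p : X × Y ↦ c p.1 p.2)
    {C : ℝ} (hC : ∀ x y, |c x y| ≤ C) {ε : ℝ} (hε : 0 < ε) :
    ((∫ p, ε * (1 - exp (-c p.1 p.2 / ε)) ∂(α.prod β) : ℝ) : EReal) ≤ otE c ε α β := by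
  refine le_iInf₂ fun γ ⟨hγα, _⟩ ↦ ?_
  have : IsProbabilityMeasure (γ.map Prod.fst) := hγα ▸ ‹_›
  have : IsProbabilityMeasure γ := Measure.isProbabilityMeasure_of_map Prod.fst
  rw [klE]
  split_ifs with h
  · obtain ⟨hγμ, hllr⟩ := h
    have hcγ : Integrable (fun p : X × Y ↦ c p.1 p.2) γ :=
      .of_bound hc.aestronglyMeasurable C (ae_of_all _ fun p ↦ hC p.1 p.2)
    have hexp : Integrable (fun p : X × Y ↦ exp (-c p.1 p.2 / ε)) (α.prod β) :=
      .of_bound (by fun_prop) (exp (C / ε)) (ae_of_all _ fun p ↦ by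
        rw [norm_of_nonneg (exp_nonneg _), exp_le_exp]
        gcongr
        exact (neg_le_abs _).trans (hC p.1 p.2))
    have key := integral_le_integral_llr_add_integral_exp hγμ hllr
      (f := fun p ↦ -c p.1 p.2 / ε) (hcγ.neg.div_const ε) hexp
    rw [integral_div, integral_neg, probReal_univ, div_le_iff₀ hε] at key
    rw [integral_const_mul, integral_sub (integrable_const 1) hexp, integral_const, probReal_univ,
      smul_eq_mul, one_mul]
    norm_cast
    linarith
  · rw [EReal.coe_mul_top_of_pos hε, EReal.coe_add_top]
    exact le_top

end otE

/-- as `ε → ∞`, the entropic optimal transport cost converges to the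
cost of the independent (product) coupling. -/
theorem otE_tendsto_atTop
    {X Y : Type*} [MetricSpace X] [CompactSpace X] [MeasurableSpace X] [BorelSpace X]
    [MetricSpace Y] [CompactSpace Y] [MeasurableSpace Y] [BorelSpace Y]
    (c : X → Y → ℝ) (hc : Continuous fun p : X × Y => c p.1 p.2)
    (hnonneg : ∀ x y, 0 ≤ c x y)
    (α : Measure X) (β : Measure Y) [IsProbabilityMeasure α] [IsProbabilityMeasure β] :
    Tendsto (fun ε : ℝ => otE c ε α β) atTop
      (nhds (((∫ x, ∫ y, c x y ∂β ∂α : ℝ)) : EReal)) := by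
  obtain ⟨C, hC⟩ := isCompact_univ.exists_bound_of_continuousOn hc.continuousOn
  have hint : Integrable (fun p : X × Y ↦ c p.1 p.2) (α.prod β) :=
    .of_bound hc.aestronglyMeasurable C (ae_of_all _ fun p ↦ hC p trivial)
  rw [← integral_prod _ hint]
  refine tendsto_of_tendsto_of_tendsto_of_le_of_le' ((continuous_coe_real_ereal.tendsto _).comp
      (tendsto_integral_mul_one_sub_exp_neg_div hint (ae_of_all _ fun p ↦ hnonneg p.1 p.2)))
    tendsto_const_nhds ?_ (Eventually.of_forall (otE_le_integral_prod c α β))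
  filter_upwards [eventually_gt_atTop 0] with ε hε
  exact integral_mul_one_sub_exp_neg_div_le_otE c α β hc.measurable
    (fun x y ↦ hC (x, y) trivial) hε
end

section
/- Let Γ and Σ be D × D real symmetric matrices such that Γ is positive semidefinite with nontrivial kernel (at least one zero eigenvalue), Σ is positive semidefinite, and eᵀΓe ≤ eᵀΣe for every e ∈ ℝ^D. Then ‖Γ‖_F² ≤ ‖Σ‖_F² − λ_min(Σ)², where ‖·‖_F denotes the Frobenius norm and λ_min(Σ) the smallest eigenvalue of Σ. -/
/-!
Write `S = Γ + Δ`; domination of the quadratic forms makes `Δ` positive semidefinite. Then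
`‖S‖_F² = ‖Γ‖_F² + 2 ⟨Γ, Δ⟩_F + ‖Δ‖_F²`, and `⟨Γ, Δ⟩_F ≥ 0` because it is the sum of the entries of
the Hadamard product `Γ ⊙ Δ`, which is positive semidefinite by the Schur product theorem. For a
unit vector `u` in the kernel of `Γ`, `λ_min(S) ≤ uᵀ S u = uᵀ Δ u ≤ ‖Δ‖_F` by Cauchy–Schwarz, and
`λ_min(S) ≥ 0`, so `λ_min(S)² ≤ ‖Δ‖_F²`.
-/

/-- The smallest eigenvalue of a symmetric matrix, as the infimum of its Rayleigh
quotient over unit vectors. -/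
noncomputable def lamMin {D : ℕ} (M : Matrix (Fin D) (Fin D) ℝ) : ℝ :=
  sInf {r : ℝ | ∃ e : Fin D → ℝ, (∑ i, (e i) ^ 2) = 1 ∧ r = ∑ i, ∑ j, e i * M i j * e j}

open Matrix

section

variable {n : Type*} [Fintype n]

lemma Matrix.sum_sum_mul_mul_eq_dotProduct_mulVec {R : Type*} [CommSemiring R]
    (M : Matrix n n R) (x : n → R) :
    ∑ i, ∑ j, x i * M i j * x j = x ⬝ᵥ M *ᵥ x := by
  classical
  rw [← toBilin'_apply, toBilin'_apply']

lemma Matrix.sum_sum_add_sq {m R : Type*} [Fintype m] [CommSemiring R] (A B : Matrix m n R) :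
    ∑ i, ∑ j, (A + B) i j ^ 2
      = ∑ i, ∑ j, A i j ^ 2 + 2 * ∑ i, ∑ j, A i j * B i j + ∑ i, ∑ j, B i j ^ 2 := by
  simp only [add_apply, add_sq, Finset.sum_add_distrib, Finset.mul_sum, mul_assoc]

lemma Matrix.sq_sum_sum_mul_mul_le {R : Type*} [CommRing R] [LinearOrder R]
    [IsStrictOrderedRing R] (M : Matrix n n R) (x : n → R) :
    (∑ i, ∑ j, x i * M i j * x j) ^ 2 ≤ (∑ i, x i ^ 2) ^ 2 * ∑ i, ∑ j, M i j ^ 2 := by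
  have h := Finset.sum_mul_sq_le_sq_mul_sq Finset.univ
    (fun p : n × n => x p.1 * x p.2) (fun p : n × n => M p.1 p.2)
  simp only [Fintype.sum_prod_type, mul_pow, ← Finset.mul_sum, ← Finset.sum_mul] at h
  convert h using 2
  · exact Finset.sum_congr rfl fun i _ => Finset.sum_congr rfl fun j _ => by ring
  · ring

lemma Matrix.PosSemidef.sum_sum_mul_mul_nonneg {M : Matrix n n ℝ} (hM : M.PosSemidef)
    (x : n → ℝ) : 0 ≤ ∑ i, ∑ j, x i * M i j * x j := by
  simpa [sum_sum_mul_mul_eq_dotProduct_mulVec] using hM.dotProduct_mulVec_nonneg x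

lemma Matrix.posSemidef_sub_of_forall_sum_sum_le {A B : Matrix n n ℝ} (hA : A.IsHermitian)
    (hB : B.IsHermitian)
    (h : ∀ x : n → ℝ, ∑ i, ∑ j, x i * A i j * x j ≤ ∑ i, ∑ j, x i * B i j * x j) :
    (B - A).PosSemidef := by
  refine .of_dotProduct_mulVec_nonneg (hB.sub hA) fun x => ?_
  have hx := h x
  simp only [sum_sum_mul_mul_eq_dotProduct_mulVec] at hx
  simpa [sub_mulVec, dotProduct_sub] using hx

lemma Matrix.PosSemidef.sum_sum_mul_nonneg {A B : Matrix n n ℝ} (hA : A.PosSemidef)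
    (hB : B.PosSemidef) : 0 ≤ ∑ i, ∑ j, A i j * B i j := by
  simpa [mulVec, dotProduct] using (hA.hadamard hB).dotProduct_mulVec_nonneg fun _ => 1

lemma Matrix.exists_sum_sq_eq_one_mulVec_eq_zero {M : Matrix n n ℝ} {x : n → ℝ} (hx : x ≠ 0)
    (hMx : M *ᵥ x = 0) : ∃ u : n → ℝ, ∑ i, u i ^ 2 = 1 ∧ M *ᵥ u = 0 := by
  have hpos : 0 < ∑ i, x i ^ 2 := by
    obtain ⟨i, hi⟩ := Function.ne_iff.mp hx
    exact Finset.sum_pos' (fun j _ => sq_nonneg (x j))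
      ⟨i, Finset.mem_univ i, sq_pos_of_ne_zero hi⟩
  refine ⟨(√(∑ i, x i ^ 2))⁻¹ • x, ?_, by rw [mulVec_smul, hMx, smul_zero]⟩
  simp only [Pi.smul_apply, smul_eq_mul, mul_pow, ← Finset.mul_sum, inv_pow,
    Real.sq_sqrt hpos.le, inv_mul_cancel₀ hpos.ne']

end

section

variable {D : ℕ} {S : Matrix (Fin D) (Fin D) ℝ}

lemma lamMin_nonneg (hS : S.PosSemidef) : 0 ≤ lamMin S :=
  Real.sInf_nonneg <| by
    rintro _ ⟨e, -, rfl⟩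
    exact hS.sum_sum_mul_mul_nonneg e

lemma lamMin_le_sum_sum_mul_mul (hS : S.PosSemidef) {u : Fin D → ℝ} (hu : ∑ i, u i ^ 2 = 1) :
    lamMin S ≤ ∑ i, ∑ j, u i * S i j * u j :=
  csInf_le ⟨0, by rintro _ ⟨e, -, rfl⟩; exact hS.sum_sum_mul_mul_nonneg e⟩ ⟨u, hu, rfl⟩

end

theorem frobenius_bound_of_dominated_psd_general
    {D : ℕ} (Γ S : Matrix (Fin D) (Fin D) ℝ)
    (hΓpsd : Γ.PosSemidef) (hSpsd : S.PosSemidef)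
    (hker : ∃ e : Fin D → ℝ, e ≠ 0 ∧ Γ.mulVec e = 0)
    (hdom : ∀ e : Fin D → ℝ,
      (∑ i, ∑ j, e i * Γ i j * e j) ≤ ∑ i, ∑ j, e i * S i j * e j) :
    (∑ i, ∑ j, (Γ i j) ^ 2) ≤ (∑ i, ∑ j, (S i j) ^ 2) - (lamMin S) ^ 2 := by
  set Δ := S - Γ
  have hΔ : Δ.PosSemidef :=
    posSemidef_sub_of_forall_sum_sum_le hΓpsd.isHermitian hSpsd.isHermitian hdom
  obtain ⟨e, he, hΓe⟩ := hker
  obtain ⟨u, hu, hΓu⟩ := exists_sum_sq_eq_one_mulVec_eq_zero he hΓe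
  have hquad : ∑ i, ∑ j, u i * S i j * u j = ∑ i, ∑ j, u i * Δ i j * u j := by
    simp only [sum_sum_mul_mul_eq_dotProduct_mulVec, Δ, sub_mulVec, hΓu, sub_zero]
  have hlam : lamMin S ^ 2 ≤ ∑ i, ∑ j, Δ i j ^ 2 := calc
    lamMin S ^ 2 ≤ (∑ i, ∑ j, u i * Δ i j * u j) ^ 2 :=
      pow_le_pow_left₀ (lamMin_nonneg hSpsd) (hquad ▸ lamMin_le_sum_sum_mul_mul hSpsd hu) 2
    _ ≤ ∑ i, ∑ j, Δ i j ^ 2 := by simpa [hu] using sq_sum_sum_mul_mul_le Δ u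
  have hS : ∑ i, ∑ j, S i j ^ 2
      = ∑ i, ∑ j, Γ i j ^ 2 + 2 * ∑ i, ∑ j, Γ i j * Δ i j + ∑ i, ∑ j, Δ i j ^ 2 := by
    rw [← sum_sum_add_sq, add_sub_cancel]
  linarith [hΓpsd.sum_sum_mul_nonneg hΔ]

/-- if `Γ` is positive semidefinite with a nontrivial kernel, `S` is
positive semidefinite, and the quadratic form of `Γ` is dominated by that of `S`,
then `‖Γ‖_F² ≤ ‖S‖_F² − λ_min(S)²`. -/
theorem frobenius_bound_of_dominated_psd
    {D : ℕ} (Γ S : Matrix (Fin D) (Fin D) ℝ)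
    (hΓsymm : Γ.IsSymm) (hSsymm : S.IsSymm)
    (hΓpsd : Γ.PosSemidef) (hSpsd : S.PosSemidef)
    (hker : ∃ e : Fin D → ℝ, e ≠ 0 ∧ Γ.mulVec e = 0)
    (hdom : ∀ e : Fin D → ℝ,
      (∑ i, ∑ j, e i * Γ i j * e j) ≤ ∑ i, ∑ j, e i * S i j * e j) :
    (∑ i, ∑ j, (Γ i j) ^ 2) ≤ (∑ i, ∑ j, (S i j) ^ 2) - (lamMin S) ^ 2 :=
  frobenius_bound_of_dominated_psd_general Γ S hΓpsd hSpsd hker hdom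
end

section
/- Let α be a compactly supported centered Borel probability measure on ℝ^D, β a compactly supported centered Borel probability measure on ℝ^E, and π, π̃ ∈ Π(α,β). Define G_{π̃}(x,y) = 2·∫ (‖x−x'‖² − ‖y−y'‖²)² dπ̃(x',y') and, for a coupling σ, the correlation matrix Γ_σ = ∫ x yᵀ dσ(x,y) ∈ ℝ^{D×E} (entrywise integral). Then ∫ G_{π̃}(x,y) dπ(x,y) = 2·C(α,β) − 16·⟨Γ_π, Γ_{π̃}⟩_F − 4·∫ ‖x‖²‖y‖² dπ(x,y) − 4·∫ ‖x‖²‖y‖² dπ̃(x,y), where ⟨·,·⟩_F is the Frobenius inner product. -/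
/-!
Write `(‖x - x'‖² - ‖y - y'‖²)² = ‖x - x'‖⁴ + ‖y - y'‖⁴ - 2 ‖x - x'‖² ‖y - y'‖²`. The quartic
terms only see the marginals. Expanding `‖x - x'‖² = ‖x‖² + ‖x'‖² - 2 ⟪x, x'⟫` turns the cross
term into a sum of products `f (x, y) * g (x', y')` and inner products `⟪φ (x, y), ψ (x', y')⟫`,
whose integrals against `π ⊗ π̃` factor. The terms linear in one of `x, y, x', y'` vanish since
`α` and `β` are centered, and `⟪x, x'⟫ ⟪y, y'⟫` yields the Frobenius pairing of the correlation
matrices. Compact support makes every continuous integrand integrable.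
-/

open MeasureTheory
open scoped RealInnerProductSpace

section Integrability

variable {Z F : Type*} [TopologicalSpace Z] [SecondCountableTopology Z] [MeasurableSpace Z]
  [OpensMeasurableSpace Z] [NormedAddCommGroup F] {μ : Measure Z} [IsFiniteMeasure μ]
  {K : Set Z} {f : Z → F}

theorem Continuous.integrable_of_ae_mem_compact (hf : Continuous f) (hK : IsCompact K)
    (hμK : ∀ᵐ z ∂μ, z ∈ K) : Integrable f μ := by
  obtain ⟨C, hC⟩ := hK.exists_bound_of_continuousOn hf.continuousOn
  exact (integrable_const C).mono' hf.aestronglyMeasurable (hμK.mono hC)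

end Integrability

section Marginals

variable {A B E : Type*} [MeasurableSpace A] [MeasurableSpace B] [NormedAddCommGroup E]
  [NormedSpace ℝ E]

theorem integral_comp_eq_of_map_eq {σ : Measure A} {μ : Measure B} {f : A → B}
    (hf : AEMeasurable f σ) (h : σ.map f = μ) {g : B → E} (hg : AEStronglyMeasurable g μ) :
    ∫ a, g (f a) ∂σ = ∫ b, g b ∂μ := by
  subst h
  exact (integral_map hf hg).symm

theorem integral_integral_comp_of_map_eq_s14 {A' B' : Type*} [MeasurableSpace A'] [MeasurableSpace B']
    {σ : Measure A} {τ : Measure A'} {μ : Measure B} {ν : Measure B'} [SFinite ν]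
    {f : A → B} {f' : A' → B'} (hf : Measurable f) (hf' : Measurable f')
    (hσ : σ.map f = μ) (hτ : τ.map f' = ν) {g : B → B' → E}
    (hg : StronglyMeasurable (Function.uncurry g)) :
    ∫ a, ∫ a', g (f a) (f' a') ∂τ ∂σ = ∫ x, ∫ y, g x y ∂ν ∂μ := by
  have hinner (x : B) : ∫ a', g x (f' a') ∂τ = ∫ y, g x y ∂ν :=
    integral_comp_eq_of_map_eq hf'.aemeasurable hτ
      (hg.comp_measurable measurable_prodMk_left).aestronglyMeasurable
  simp_rw [hinner]
  exact integral_comp_eq_of_map_eq hf.aemeasurable hσ hg.integral_prod_right'.aestronglyMeasurable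

theorem ae_mem_prod_of_map_fst_of_map_snd {σ : Measure (A × B)} {μ : Measure A} {ν : Measure B}
    (h1 : σ.map Prod.fst = μ) (h2 : σ.map Prod.snd = ν) {K : Set A} {L : Set B}
    (hK : ∀ᵐ x ∂μ, x ∈ K) (hL : ∀ᵐ y ∂ν, y ∈ L) : ∀ᵐ p ∂σ, p ∈ K ×ˢ L :=
  (ae_of_ae_map measurable_fst.aemeasurable (h1 ▸ hK)).and
    (ae_of_ae_map measurable_snd.aemeasurable (h2 ▸ hL))

theorem ae_prod_mem_prod {μ : Measure A} {ν : Measure B} [SFinite ν] {K : Set A} {L : Set B}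
    (hK : ∀ᵐ x ∂μ, x ∈ K) (hL : ∀ᵐ y ∂ν, y ∈ L) : ∀ᵐ z ∂μ.prod ν, z ∈ K ×ˢ L :=
  (Measure.quasiMeasurePreserving_fst.ae hK).and (Measure.quasiMeasurePreserving_snd.ae hL)

end Marginals

section InnerProduct

variable {A B X : Type*} [MeasurableSpace A] [MeasurableSpace B] {μ : Measure A} {ν : Measure B}
  [SFinite μ] [SFinite ν] [NormedAddCommGroup X] [InnerProductSpace ℝ X] [CompleteSpace X]

theorem integral_prod_inner {φ : A → X} {ψ : B → X} (hφ : Integrable φ μ) (hψ : Integrable ψ ν) :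
    ∫ z, ⟪φ z.1, ψ z.2⟫ ∂μ.prod ν = ⟪∫ x, φ x ∂μ, ∫ y, ψ y ∂ν⟫ := by
  have hint : Integrable (fun z : A × B => ⟪φ z.1, ψ z.2⟫) (μ.prod ν) :=
    (hφ.norm.mul_prod hψ.norm).mono (hφ.1.comp_fst.inner hψ.1.comp_snd)
      (ae_of_all _ fun z => by simpa using norm_inner_le_norm (𝕜 := ℝ) (φ z.1) (ψ z.2))
  rw [integral_prod _ hint]
  simp_rw [integral_inner hψ, real_inner_comm (∫ y, ψ y ∂ν)]
  exact integral_inner hφ _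

end InnerProduct

section Coupling

variable {X Y : Type*} [NormedAddCommGroup X] [InnerProductSpace ℝ X] [NormedAddCommGroup Y]
  [InnerProductSpace ℝ Y]

theorem norm_sub_sq_mul_norm_sub_sq (x x' : X) (y y' : Y) :
    ‖x - x'‖ ^ 2 * ‖y - y'‖ ^ 2 =
      ‖x‖ ^ 2 * ‖y‖ ^ 2 + ‖x'‖ ^ 2 * ‖y'‖ ^ 2 + ‖x‖ ^ 2 * ‖y'‖ ^ 2 + ‖y‖ ^ 2 * ‖x'‖ ^ 2
        - 2 * ⟪‖y‖ ^ 2 • x, x'⟫ - 2 * ⟪x, ‖y'‖ ^ 2 • x'⟫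
        - 2 * ⟪‖x‖ ^ 2 • y, y'⟫ - 2 * ⟪y, ‖x'‖ ^ 2 • y'⟫ + 4 * (⟪x, x'⟫ * ⟪y, y'⟫) := by
  simp only [norm_sub_sq_real, real_inner_smul_left, real_inner_smul_right]
  ring

variable [FiniteDimensional ℝ X] [MeasurableSpace X] [BorelSpace X] [FiniteDimensional ℝ Y]
  [MeasurableSpace Y] [BorelSpace Y]

theorem integral_prod_norm_sub_sq_mul_norm_sub_sq {α : Measure X} {β : Measure Y}
    (hα : ∫ x, x ∂α = 0) (hβ : ∫ y, y ∂β = 0) {σ τ : Measure (X × Y)}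
    [IsProbabilityMeasure σ] [IsProbabilityMeasure τ]
    (hσ1 : σ.map Prod.fst = α) (hσ2 : σ.map Prod.snd = β)
    (hτ1 : τ.map Prod.fst = α) (hτ2 : τ.map Prod.snd = β)
    {K : Set (X × Y)} (hK : IsCompact K) (hσK : ∀ᵐ p ∂σ, p ∈ K) (hτK : ∀ᵐ q ∂τ, q ∈ K) :
    ∫ z, ‖z.1.1 - z.2.1‖ ^ 2 * ‖z.1.2 - z.2.2‖ ^ 2 ∂σ.prod τ =
      (∫ p, ‖p.1‖ ^ 2 * ‖p.2‖ ^ 2 ∂σ) + (∫ q, ‖q.1‖ ^ 2 * ‖q.2‖ ^ 2 ∂τ)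
        + 2 * (∫ x, ‖x‖ ^ 2 ∂α) * (∫ y, ‖y‖ ^ 2 ∂β)
        + 4 * ∫ z, ⟪z.1.1, z.2.1⟫ * ⟪z.1.2, z.2.2⟫ ∂σ.prod τ := by
  have hρ (f : (X × Y) × (X × Y) → ℝ) (hf : Continuous f) : Integrable f (σ.prod τ) :=
    hf.integrable_of_ae_mem_compact (hK.prod hK) (ae_prod_mem_prod hσK hτK)
  simp_rw [norm_sub_sq_mul_norm_sub_sq]
  simp (disch := (apply hρ; fun_prop)) only [integral_add, integral_sub, integral_const_mul]
  rw [integral_fun_fst (fun p : X × Y => ‖p.1‖ ^ 2 * ‖p.2‖ ^ 2),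
    integral_fun_snd (fun q : X × Y => ‖q.1‖ ^ 2 * ‖q.2‖ ^ 2),
    integral_prod_mul (fun p : X × Y => ‖p.1‖ ^ 2) (fun q : X × Y => ‖q.2‖ ^ 2),
    integral_prod_mul (fun p : X × Y => ‖p.2‖ ^ 2) (fun q : X × Y => ‖q.1‖ ^ 2),
    integral_prod_inner (φ := fun p : X × Y => ‖p.2‖ ^ 2 • p.1) (ψ := Prod.fst) ?_ ?_,
    integral_prod_inner (φ := Prod.fst) (ψ := fun q : X × Y => ‖q.2‖ ^ 2 • q.1) ?_ ?_,
    integral_prod_inner (φ := fun p : X × Y => ‖p.1‖ ^ 2 • p.2) (ψ := Prod.snd) ?_ ?_,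
    integral_prod_inner (φ := Prod.snd) (ψ := fun q : X × Y => ‖q.1‖ ^ 2 • q.2) ?_ ?_]
  · have hfst {γ : Measure (X × Y)} (h : γ.map Prod.fst = α) :
        ∫ p, p.1 ∂γ = 0 ∧ ∫ p, ‖p.1‖ ^ 2 ∂γ = ∫ x, ‖x‖ ^ 2 ∂α :=
      ⟨(integral_comp_eq_of_map_eq measurable_fst.aemeasurable h (by fun_prop)).trans hα,
        integral_comp_eq_of_map_eq (g := (‖·‖ ^ 2)) measurable_fst.aemeasurable h (by fun_prop)⟩
    have hsnd {γ : Measure (X × Y)} (h : γ.map Prod.snd = β) :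
        ∫ p, p.2 ∂γ = 0 ∧ ∫ p, ‖p.2‖ ^ 2 ∂γ = ∫ y, ‖y‖ ^ 2 ∂β :=
      ⟨(integral_comp_eq_of_map_eq measurable_snd.aemeasurable h (by fun_prop)).trans hβ,
        integral_comp_eq_of_map_eq (g := (‖·‖ ^ 2)) measurable_snd.aemeasurable h (by fun_prop)⟩
    rw [(hfst hσ1).2, (hfst hτ1).1, (hfst hτ1).2, (hfst hσ1).1, (hsnd hσ2).2, (hsnd hτ2).1,
      (hsnd hτ2).2, (hsnd hσ2).1]
    simp only [probReal_univ, one_smul, inner_zero_left, inner_zero_right]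
    ring
  all_goals exact Continuous.integrable_of_ae_mem_compact (by fun_prop) hK (by assumption)

end Coupling

section Euclidean

variable {ι κ : Type*} [Fintype ι] [Fintype κ]

theorem inner_mul_inner_eq_sum_sum (x x' : EuclideanSpace ℝ ι) (y y' : EuclideanSpace ℝ κ) :
    ⟪x, x'⟫ * ⟪y, y'⟫ = ∑ i, ∑ j, (x i * y j) * (x' i * y' j) := by
  simp only [PiLp.inner_apply, RCLike.inner_apply, conj_trivial, Finset.sum_mul_sum]
  exact Finset.sum_congr rfl fun i _ => Finset.sum_congr rfl fun j _ => by ring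

theorem integral_prod_inner_mul_inner
    {σ τ : Measure (EuclideanSpace ℝ ι × EuclideanSpace ℝ κ)} [SFinite σ] [SFinite τ]
    (hσ : ∀ i j, Integrable (fun p => p.1 i * p.2 j) σ)
    (hτ : ∀ i j, Integrable (fun q => q.1 i * q.2 j) τ) :
    ∫ z, ⟪z.1.1, z.2.1⟫ * ⟪z.1.2, z.2.2⟫ ∂σ.prod τ =
      ∑ i, ∑ j, (∫ p, p.1 i * p.2 j ∂σ) * (∫ q, q.1 i * q.2 j ∂τ) := by
  simp_rw [inner_mul_inner_eq_sum_sum]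
  rw [integral_finsetSum _ fun i _ => integrable_finsetSum _ fun j _ => (hσ i j).mul_prod (hτ i j)]
  refine Finset.sum_congr rfl fun i _ => ?_
  rw [integral_finsetSum _ fun j _ => (hσ i j).mul_prod (hτ i j)]
  exact Finset.sum_congr rfl fun j _ =>
    integral_prod_mul (μ := σ) (ν := τ) (fun p => p.1 i * p.2 j) (fun q => q.1 i * q.2 j)

end Euclidean

/-- the pairing of the GW-loss gradient at `π̃` against a coupling `π`
decomposes through the marginal constant, the Frobenius pairing of correlation
matrices, and mixed second moments. -/
theorem gw_gradient_pairing_decomposition {D E : ℕ}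
    (α : Measure (EuclideanSpace ℝ (Fin D))) (β : Measure (EuclideanSpace ℝ (Fin E)))
    [IsProbabilityMeasure α] [IsProbabilityMeasure β]
    (KX : Set (EuclideanSpace ℝ (Fin D))) (KY : Set (EuclideanSpace ℝ (Fin E)))
    (hKX : IsCompact KX) (hKY : IsCompact KY) (hαK : α KXᶜ = 0) (hβK : β KYᶜ = 0)
    (hαcentered : ∫ x, x ∂α = 0) (hβcentered : ∫ y, y ∂β = 0)
    (π πt : Measure (EuclideanSpace ℝ (Fin D) × EuclideanSpace ℝ (Fin E)))
    (hπ1 : π.map Prod.fst = α) (hπ2 : π.map Prod.snd = β)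
    (hπt1 : πt.map Prod.fst = α) (hπt2 : πt.map Prod.snd = β) :
    ∫ p, (2 * ∫ q, (‖p.1 - q.1‖ ^ 2 - ‖p.2 - q.2‖ ^ 2) ^ 2 ∂πt) ∂π =
      2 * ((∫ x, ∫ x', ‖x - x'‖ ^ 4 ∂α ∂α) + (∫ y, ∫ y', ‖y - y'‖ ^ 4 ∂β ∂β)
          - 4 * (∫ x, ‖x‖ ^ 2 ∂α) * (∫ y, ‖y‖ ^ 2 ∂β))
        - 16 * (∑ i, ∑ j, (∫ p, p.1 i * p.2 j ∂π) * (∫ q, q.1 i * q.2 j ∂πt))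
        - 4 * (∫ p, ‖p.1‖ ^ 2 * ‖p.2‖ ^ 2 ∂π)
        - 4 * (∫ q, ‖q.1‖ ^ 2 * ‖q.2‖ ^ 2 ∂πt) := by
  have hπK := ae_mem_prod_of_map_fst_of_map_snd hπ1 hπ2 (mem_ae_iff.2 hαK) (mem_ae_iff.2 hβK)
  have hπtK := ae_mem_prod_of_map_fst_of_map_snd hπt1 hπt2 (mem_ae_iff.2 hαK) (mem_ae_iff.2 hβK)
  have hK := hKX.prod hKY
  have : IsProbabilityMeasure π :=
    (Measure.isProbabilityMeasure_map_iff measurable_fst.aemeasurable).1 (hπ1 ▸ inferInstance)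
  have : IsProbabilityMeasure πt :=
    (Measure.isProbabilityMeasure_map_iff measurable_fst.aemeasurable).1 (hπt1 ▸ inferInstance)
  have hρ (f : _ → ℝ) (hf : Continuous f) : Integrable f (π.prod πt) :=
    hf.integrable_of_ae_mem_compact (hK.prod hK) (ae_prod_mem_prod hπK hπtK)
  have hsq (a b : ℝ) : (a ^ 2 - b ^ 2) ^ 2 = a ^ 4 + b ^ 4 - 2 * (a ^ 2 * b ^ 2) := by ring
  simp_rw [hsq]
  rw [integral_const_mul, integral_integral (hρ _ (by fun_prop))]
  simp (disch := (apply hρ; fun_prop)) only [integral_add, integral_sub, integral_const_mul]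
  rw [← integral_integral (f := fun p q => ‖p.1 - q.1‖ ^ 4) (hρ _ (by fun_prop)),
    ← integral_integral (f := fun p q => ‖p.2 - q.2‖ ^ 4) (hρ _ (by fun_prop)),
    integral_integral_comp_of_map_eq_s14 measurable_fst measurable_fst hπ1 hπt1
      (g := fun x x' => ‖x - x'‖ ^ 4) (Continuous.stronglyMeasurable (by fun_prop)),
    integral_integral_comp_of_map_eq_s14 measurable_snd measurable_snd hπ2 hπt2
      (g := fun y y' => ‖y - y'‖ ^ 4) (Continuous.stronglyMeasurable (by fun_prop)),
    integral_prod_norm_sub_sq_mul_norm_sub_sq hαcentered hβcentered hπ1 hπ2 hπt1 hπt2 hK hπK hπtK,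
    integral_prod_inner_mul_inner
      (fun i j => Continuous.integrable_of_ae_mem_compact (by fun_prop) hK hπK)
      (fun i j => Continuous.integrable_of_ae_mem_compact (by fun_prop) hK hπtK)]
  ring
end

section
/- Let α be a compactly supported centered Borel probability measure on ℝ^D, β a compactly supported centered Borel probability measure on ℝ^E, and ε > 0. Fix π_t ∈ Π(α,β), set Γ_t = ∫ x yᵀ dπ_t(x,y) ∈ ℝ^{D×E}, and define G_{π_t}(x,y) = 2·∫ (‖x−x'‖² − ‖y−y'‖²)² dπ_t(x',y'). Then there exists a constant k ∈ ℝ (independent of π) such that for every π ∈ Π(α,β): ∫ G_{π_t} dπ + ε·KL(π‖α⊗β) = ( ∫ c_{Γ_t} dπ + ε·KL(π‖α⊗β) ) + k. In particular, a coupling π minimizes the entropic objective π ↦ ∫ c_{Γ_t} dπ + ε·KL(π‖α⊗β) over Π(α,β) if and only if it minimizes the mirror-descent objective π ↦ ∫ G_{π_t} dπ + ε·KL(π‖α⊗β) over Π(α,β). -/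
open MeasureTheory Classical

/-- The set of couplings between `α` and `β`. -/
def couplings {X Y : Type*} [MeasurableSpace X] [MeasurableSpace Y]
    (α : Measure X) (β : Measure Y) : Set (Measure (X × Y)) :=
  {π | π.map Prod.fst = α ∧ π.map Prod.snd = β}

/-!
Write `s = ‖x‖² - 2⟪x, x'⟫`, `t = ‖y‖² - 2⟪y, y'⟫` and `u = ‖x'‖² - ‖y'‖²`, so that
`‖x - x'‖² - ‖y - y'‖² = s + u - t`. The identity `(s + u - t)² = (s + u)² + (u - t)² - u² - 2st`
splits `G_{π_t}(x, y)` into `G_{π_t}(x, 0) + G_{π_t}(0, y) - G_{π_t}(0, 0)` plus the integral of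
`-4st` against `π_t`; since `π_t` is centered, the latter is exactly `c_{Γ_t}(x, y)`.
The remaining terms depend on `x` alone or on `y` alone, so their integral against any coupling
`π ∈ Π(α, β)` only involves the marginals and is the constant `k`.
-/

open scoped RealInnerProductSpace

theorem Continuous.integrable_of_ae_mem_isCompact {Z F : Type*} [TopologicalSpace Z] [T2Space Z]
    [MeasurableSpace Z] [OpensMeasurableSpace Z] [NormedAddCommGroup F] {μ : Measure Z}
    [IsFiniteMeasureOnCompacts μ] {K : Set Z} (hK : IsCompact K) (hμK : ∀ᵐ z ∂μ, z ∈ K)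
    {f : Z → F} (hf : Continuous f) : Integrable f μ := by
  rw [← Measure.restrict_eq_self_of_ae_mem hμK]
  exact hf.continuousOn.integrableOn_compact hK

theorem isMinOn_iff_of_eq_add_coe {ι : Type*} {S : Set ι} {F G : ι → EReal} {k : ℝ}
    (hGF : ∀ a ∈ S, G a = F a + k) {a₀ : ι} (ha₀ : a₀ ∈ S) :
    IsMinOn F S a₀ ↔ IsMinOn G S a₀ := by
  simp only [isMinOn_iff]
  refine forall₂_congr fun a ha => ?_
  rw [hGF a₀ ha₀, hGF a ha, (EReal.addLECancellable_coe k).add_le_add_iff_right]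

section Couplings

variable {X Y : Type*} [MeasurableSpace X] [MeasurableSpace Y] {α : Measure X} {β : Measure Y}
  {π : Measure (X × Y)}

theorem isProbabilityMeasure_of_mem_couplings [IsProbabilityMeasure α] (hπ : π ∈ couplings α β) :
    IsProbabilityMeasure π :=
  have : IsProbabilityMeasure (π.map Prod.fst) := hπ.1 ▸ ‹_›
  Measure.isProbabilityMeasure_of_map Prod.fst

theorem ae_mem_prod_of_mem_couplings {s : Set X} {t : Set Y} (hπ : π ∈ couplings α β)
    (hs : ∀ᵐ x ∂α, x ∈ s) (ht : ∀ᵐ y ∂β, y ∈ t) : ∀ᵐ p ∂π, p ∈ s ×ˢ t := by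
  rw [← hπ.1] at hs
  rw [← hπ.2] at ht
  filter_upwards [ae_of_ae_map measurable_fst.aemeasurable hs,
    ae_of_ae_map measurable_snd.aemeasurable ht] with p hp₁ hp₂ using ⟨hp₁, hp₂⟩

variable {F : Type*} [NormedAddCommGroup F] [NormedSpace ℝ F]

theorem integral_comp_fst_of_mem_couplings (hπ : π ∈ couplings α β) {f : X → F}
    (hf : AEStronglyMeasurable f α) : ∫ p, f p.1 ∂π = ∫ x, f x ∂α := by
  rw [← hπ.1] at hf ⊢
  exact (integral_map measurable_fst.aemeasurable hf).symm

theorem integral_comp_snd_of_mem_couplings (hπ : π ∈ couplings α β) {f : Y → F}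
    (hf : AEStronglyMeasurable f β) : ∫ p, f p.2 ∂π = ∫ y, f y ∂β := by
  rw [← hπ.2] at hf ⊢
  exact (integral_map measurable_snd.aemeasurable hf).symm

theorem integral_add_separable_of_mem_couplings (hπ : π ∈ couplings α β) {c : X × Y → ℝ}
    {f : X → ℝ} {h : Y → ℝ} (hc : Integrable c π) (hf : Integrable f α) (hh : Integrable h β) :
    ∫ p, c p + (f p.1 + h p.2) ∂π = ∫ p, c p ∂π + (∫ x, f x ∂α + ∫ y, h y ∂β) := by
  have hf' : Integrable (fun p => f p.1) π := (hπ.1 ▸ hf).comp_measurable measurable_fst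
  have hh' : Integrable (fun p => h p.2) π := (hπ.2 ▸ hh).comp_measurable measurable_snd
  rw [integral_add (g := fun p => f p.1 + h p.2) hc (hf'.add hh'), integral_add hf' hh',
    integral_comp_fst_of_mem_couplings hπ hf.1, integral_comp_snd_of_mem_couplings hπ hh.1]

end Couplings

section GWGradient

variable {X Y : Type*} [NormedAddCommGroup X] [NormedAddCommGroup Y]
  [MeasurableSpace X] [MeasurableSpace Y]

/-- The function `G_μ`, the gradient of the Gromov–Wasserstein loss at the coupling `μ`. -/
noncomputable def gwGradient (μ : Measure (X × Y)) (p : X × Y) : ℝ :=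
  2 * ∫ q, (‖p.1 - q.1‖ ^ 2 - ‖p.2 - q.2‖ ^ 2) ^ 2 ∂μ

variable [InnerProductSpace ℝ X] [InnerProductSpace ℝ Y] [FiniteDimensional ℝ X]
  [FiniteDimensional ℝ Y] [BorelSpace X] [BorelSpace Y] {μ : Measure (X × Y)} {K : Set (X × Y)}

theorem continuous_gwGradient [IsFiniteMeasure μ] (hK : IsCompact K) (hμK : ∀ᵐ q ∂μ, q ∈ K) :
    Continuous (gwGradient μ) := by
  unfold gwGradient
  rw [← Measure.restrict_eq_self_of_ae_mem hμK]
  exact continuous_const.mul (continuous_parametric_integral_of_continuous (by fun_prop) hK)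

theorem gwGradient_eq [IsProbabilityMeasure μ] (hK : IsCompact K) (hμK : ∀ᵐ q ∂μ, q ∈ K)
    (hμ₁ : ∫ q, q.1 ∂μ = 0) (hμ₂ : ∫ q, q.2 ∂μ = 0) (p : X × Y) :
    gwGradient μ p = -16 * ∫ q, ⟪p.1, q.1⟫ * ⟪p.2, q.2⟫ ∂μ - 4 * ‖p.1‖ ^ 2 * ‖p.2‖ ^ 2
      + (gwGradient μ (p.1, 0) - gwGradient μ 0 + gwGradient μ (0, p.2)) := by
  obtain ⟨x, y⟩ := p
  have hintegrable : ∀ f : X × Y → ℝ, Continuous f → Integrable f μ :=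
    fun f hf => hf.integrable_of_ae_mem_isCompact hK hμK
  have hx : ∫ q, ⟪x, q.1⟫ ∂μ = 0 := by
    rw [integral_inner (continuous_fst.integrable_of_ae_mem_isCompact hK hμK) x, hμ₁,
      inner_zero_right]
  have hy : ∫ q, ⟪y, q.2⟫ ∂μ = 0 := by
    rw [integral_inner (continuous_snd.integrable_of_ae_mem_isCompact hK hμK) y, hμ₂,
      inner_zero_right]
  have hpt : ∀ q : X × Y, (‖x - q.1‖ ^ 2 - ‖y - q.2‖ ^ 2) ^ 2 =
      (‖x - q.1‖ ^ 2 - ‖q.2‖ ^ 2) ^ 2 + (‖q.1‖ ^ 2 - ‖y - q.2‖ ^ 2) ^ 2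
        - (‖q.1‖ ^ 2 - ‖q.2‖ ^ 2) ^ 2
        + (-8 * (⟪x, q.1⟫ * ⟪y, q.2⟫) - 2 * ‖x‖ ^ 2 * ‖y‖ ^ 2)
        + (4 * ‖y‖ ^ 2 * ⟪x, q.1⟫ + 4 * ‖x‖ ^ 2 * ⟪y, q.2⟫) := by
    intro q
    rw [norm_sub_sq_real x, norm_sub_sq_real y]
    ring
  simp only [gwGradient, Prod.fst_zero, Prod.snd_zero, zero_sub, norm_neg]
  rw [integral_congr_ae (ae_of_all _ hpt), integral_add, integral_add, integral_sub, integral_add,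
    integral_sub, integral_add, integral_const_mul, integral_const_mul, integral_const_mul,
    integral_const_mul, integral_const, probReal_univ, one_smul, hx, hy]
  · ring
  all_goals exact hintegrable _ (by fun_prop)

theorem integral_gwGradient_of_mem_couplings {α : Measure X} {β : Measure Y}
    [IsProbabilityMeasure α] [IsProbabilityMeasure β] {KX : Set X} {KY : Set Y}
    {πt π : Measure (X × Y)}
    (hKX : IsCompact KX) (hKY : IsCompact KY) (hαK : ∀ᵐ x ∂α, x ∈ KX) (hβK : ∀ᵐ y ∂β, y ∈ KY)
    (hα : ∫ x, x ∂α = 0) (hβ : ∫ y, y ∂β = 0) (hπt : πt ∈ couplings α β)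
    (hπ : π ∈ couplings α β) :
    ∫ p, gwGradient πt p ∂π =
      ∫ p, (-16 * ∫ q, ⟪p.1, q.1⟫ * ⟪p.2, q.2⟫ ∂πt - 4 * ‖p.1‖ ^ 2 * ‖p.2‖ ^ 2) ∂π
        + (∫ x, gwGradient πt (x, 0) - gwGradient πt 0 ∂α + ∫ y, gwGradient πt (0, y) ∂β) := by
  have := isProbabilityMeasure_of_mem_couplings hπt
  have := isProbabilityMeasure_of_mem_couplings hπ
  have hπtK := ae_mem_prod_of_mem_couplings hπt hαK hβK
  have hπt₁ : ∫ q, q.1 ∂πt = 0 :=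
    (integral_comp_fst_of_mem_couplings hπt aestronglyMeasurable_id).trans hα
  have hπt₂ : ∫ q, q.2 ∂πt = 0 :=
    (integral_comp_snd_of_mem_couplings hπt aestronglyMeasurable_id).trans hβ
  have hgw := continuous_gwGradient (hKX.prod hKY) hπtK
  have hΓ : Continuous fun p : X × Y => ∫ q, ⟪p.1, q.1⟫ * ⟪p.2, q.2⟫ ∂πt := by
    rw [← Measure.restrict_eq_self_of_ae_mem hπtK]
    exact continuous_parametric_integral_of_continuous (by fun_prop) (hKX.prod hKY)
  rw [integral_congr_ae (ae_of_all _ (gwGradient_eq (hKX.prod hKY) hπtK hπt₁ hπt₂)),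
    integral_add_separable_of_mem_couplings hπ
      (f := fun x => gwGradient πt (x, 0) - gwGradient πt 0) (h := fun y => gwGradient πt (0, y))]
  · exact Continuous.integrable_of_ae_mem_isCompact (hKX.prod hKY)
      (ae_mem_prod_of_mem_couplings hπ hαK hβK) (by fun_prop)
  · exact Continuous.integrable_of_ae_mem_isCompact hKX hαK (by fun_prop)
  · exact Continuous.integrable_of_ae_mem_isCompact hKY hβK (by fun_prop)

end GWGradient

theorem integral_inner_mul_inner_eq_sum {ι κ : Type*} [Fintype ι] [Fintype κ]
    {μ : Measure (EuclideanSpace ℝ ι × EuclideanSpace ℝ κ)}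
    (hμ : ∀ i j, Integrable (fun q => q.1 i * q.2 j) μ)
    (x : EuclideanSpace ℝ ι) (y : EuclideanSpace ℝ κ) :
    ∫ q, ⟪x, q.1⟫ * ⟪y, q.2⟫ ∂μ = ∑ i, ∑ j, (∫ q, q.1 i * q.2 j ∂μ) * (x i * y j) := by
  have hpt : ∀ q : EuclideanSpace ℝ ι × EuclideanSpace ℝ κ,
      ⟪x, q.1⟫ * ⟪y, q.2⟫ = ∑ i, ∑ j, (x i * y j) * (q.1 i * q.2 j) := by
    intro q
    simp only [PiLp.inner_apply, RCLike.inner_apply, conj_trivial, Finset.sum_mul_sum]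
    exact Finset.sum_congr rfl fun i _ => Finset.sum_congr rfl fun j _ => by ring
  simp_rw [hpt]
  rw [integral_finsetSum _ fun i _ => integrable_finsetSum _ fun j _ => (hμ i j).const_mul _]
  refine Finset.sum_congr rfl fun i _ => ?_
  rw [integral_finsetSum _ fun j _ => (hμ i j).const_mul _]
  exact Finset.sum_congr rfl fun j _ => by rw [integral_const_mul, mul_comm]

theorem mirror_descent_equivalence_general {D E : ℕ}
    (α : Measure (EuclideanSpace ℝ (Fin D))) (β : Measure (EuclideanSpace ℝ (Fin E)))
    [IsProbabilityMeasure α] [IsProbabilityMeasure β]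
    (KX : Set (EuclideanSpace ℝ (Fin D))) (KY : Set (EuclideanSpace ℝ (Fin E)))
    (hKX : IsCompact KX) (hKY : IsCompact KY) (hαK : α KXᶜ = 0) (hβK : β KYᶜ = 0)
    (hαcentered : ∫ x, x ∂α = 0) (hβcentered : ∫ y, y ∂β = 0)
    (ε : ℝ)
    (πt : Measure (EuclideanSpace ℝ (Fin D) × EuclideanSpace ℝ (Fin E)))
    (hπt : πt ∈ couplings α β)
    -- the mirror-descent objective, built from the gradient of the GW loss at `π_t`
    (G : Measure (EuclideanSpace ℝ (Fin D) × EuclideanSpace ℝ (Fin E)) → EReal)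
    (hG : ∀ π, G π =
      ((∫ p, (2 * ∫ q, (‖p.1 - q.1‖ ^ 2 - ‖p.2 - q.2‖ ^ 2) ^ 2 ∂πt) ∂π : ℝ) : EReal)
        + (ε : EReal) * klE π (α.prod β))
    -- the entropic OT objective for the cost `c_{Γ_t}` with `Γ_t = ∫ x yᵀ dπ_t`
    (F : Measure (EuclideanSpace ℝ (Fin D) × EuclideanSpace ℝ (Fin E)) → EReal)
    (hF : ∀ π, F π =
      ((∫ p, (-16 * ∑ i, ∑ j, (∫ q, q.1 i * q.2 j ∂πt) * (p.1 i * p.2 j)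
          - 4 * ‖p.1‖ ^ 2 * ‖p.2‖ ^ 2) ∂π : ℝ) : EReal)
        + (ε : EReal) * klE π (α.prod β)) :
    ∃ k : ℝ, (∀ π ∈ couplings α β, G π = F π + (k : EReal)) ∧
      ∀ π₀ ∈ couplings α β,
        ((∀ π ∈ couplings α β, F π₀ ≤ F π) ↔ (∀ π ∈ couplings α β, G π₀ ≤ G π)) := by
  have hαK' : ∀ᵐ x ∂α, x ∈ KX := ae_iff.2 hαK
  have hβK' : ∀ᵐ y ∂β, y ∈ KY := ae_iff.2 hβK
  have := isProbabilityMeasure_of_mem_couplings hπt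
  have hΓ : ∀ x y, ∫ q, ⟪x, q.1⟫ * ⟪y, q.2⟫ ∂πt =
      ∑ i, ∑ j, (∫ q, q.1 i * q.2 j ∂πt) * (x i * y j) :=
    integral_inner_mul_inner_eq_sum fun i j => Continuous.integrable_of_ae_mem_isCompact
      (hKX.prod hKY) (ae_mem_prod_of_mem_couplings hπt hαK' hβK') (by fun_prop)
  have hGF : ∀ π ∈ couplings α β, G π = F π +
      ((∫ x, gwGradient πt (x, 0) - gwGradient πt 0 ∂α + ∫ y, gwGradient πt (0, y) ∂β : ℝ) :
        EReal) := by
    intro π hπ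
    rw [hF, show G π = ((∫ p, gwGradient πt p ∂π : ℝ) : EReal) + ε * klE π (α.prod β) from hG π,
      integral_gwGradient_of_mem_couplings hKX hKY hαK' hβK' hαcentered hβcentered hπt hπ,
      EReal.coe_add, add_right_comm]
    simp only [hΓ]
  exact ⟨_, hGF, fun π₀ hπ₀ => by simpa only [isMinOn_iff] using isMinOn_iff_of_eq_add_coe hGF hπ₀⟩

/-- the KL-regularized linearization of the GW objective around a coupling
`π_t` coincides, up to an additive constant, with the entropic OT objective for the cost
`c_{Γ_t}`; in particular both have the same minimizers over couplings. -/
theorem mirror_descent_equivalence {D E : ℕ}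
    (α : Measure (EuclideanSpace ℝ (Fin D))) (β : Measure (EuclideanSpace ℝ (Fin E)))
    [IsProbabilityMeasure α] [IsProbabilityMeasure β]
    (KX : Set (EuclideanSpace ℝ (Fin D))) (KY : Set (EuclideanSpace ℝ (Fin E)))
    (hKX : IsCompact KX) (hKY : IsCompact KY) (hαK : α KXᶜ = 0) (hβK : β KYᶜ = 0)
    (hαcentered : ∫ x, x ∂α = 0) (hβcentered : ∫ y, y ∂β = 0)
    (ε : ℝ) (hε : 0 < ε)
    (πt : Measure (EuclideanSpace ℝ (Fin D) × EuclideanSpace ℝ (Fin E)))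
    (hπt : πt ∈ couplings α β)
    -- the mirror-descent objective, built from the gradient of the GW loss at `π_t`
    (G : Measure (EuclideanSpace ℝ (Fin D) × EuclideanSpace ℝ (Fin E)) → EReal)
    (hG : ∀ π, G π =
      ((∫ p, (2 * ∫ q, (‖p.1 - q.1‖ ^ 2 - ‖p.2 - q.2‖ ^ 2) ^ 2 ∂πt) ∂π : ℝ) : EReal)
        + (ε : EReal) * klE π (α.prod β))
    -- the entropic OT objective for the cost `c_{Γ_t}` with `Γ_t = ∫ x yᵀ dπ_t`
    (F : Measure (EuclideanSpace ℝ (Fin D) × EuclideanSpace ℝ (Fin E)) → EReal)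
    (hF : ∀ π, F π =
      ((∫ p, (-16 * ∑ i, ∑ j, (∫ q, q.1 i * q.2 j ∂πt) * (p.1 i * p.2 j)
          - 4 * ‖p.1‖ ^ 2 * ‖p.2‖ ^ 2) ∂π : ℝ) : EReal)
        + (ε : EReal) * klE π (α.prod β)) :
    ∃ k : ℝ, (∀ π ∈ couplings α β, G π = F π + (k : EReal)) ∧
      ∀ π₀ ∈ couplings α β,
        ((∀ π ∈ couplings α β, F π₀ ≤ F π) ↔ (∀ π ∈ couplings α β, G π₀ ≤ G π)) :=
  mirror_descent_equivalence_general α β KX KY hKX hKY hαK hβK hαcentered hβcentered ε πt hπt G hG F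
    hF
end
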